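/- Let N ≥ 2 be an integer, 1 < p < N^{1/2}, and γ > 0. If 0 < α < α_{N,p}(γ), then D_{N,p,γ,α} is not attained by any u ∈ S_{N,p,γ}, and moreover D_{N,p,γ,α} = 1. -/

import Mathlib

open MeasureTheory RealInnerProductSpace

noncomputable section

abbrev EucSp (N : ℕ) := EuclideanSpace ℝ (Fin N)

/-- The `L^p`-norm (with a real exponent `p`) of a real-valued function on `ℝ^N`. -/
def pNorm (N : ℕ) (p : ℝ) (u : EucSp N → ℝ) : ℝ :=
  (eLpNorm u (ENNReal.ofReal p) volume).toReal

/-- The `L^p`-norm (with a real exponent `p`) of a vector-valued function on `ℝ^N`. -/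
def pNormV (N : ℕ) (p : ℝ) (g : EucSp N → EucSp N) : ℝ :=
  (eLpNorm g (ENNReal.ofReal p) volume).toReal

/-- `g` is the weak (distributional) gradient of `u` on `ℝ^N`. -/
def HasWeakGradient (N : ℕ) (u : EucSp N → ℝ) (g : EucSp N → EucSp N) : Prop :=
  ∀ φ : EucSp N → ℝ, ContDiff ℝ (⊤ : ℕ∞) φ → HasCompactSupport φ →
    ∀ v : EucSp N, ∫ x, u x * fderiv ℝ φ x v = - ∫ x, ⟪g x, v⟫ * φ x

/-- `u` belongs to `W^{1,p}(ℝ^N)` with weak gradient `g`. -/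
def MemW1p (N : ℕ) (p : ℝ) (u : EucSp N → ℝ) (g : EucSp N → EucSp N) : Prop :=
  MemLp u (ENNReal.ofReal p) volume ∧ MemLp g (ENNReal.ofReal p) volume ∧
    HasWeakGradient N u g

/-- `u` (with weak gradient `g`) belongs to the unit sphere
`S_{N,p,γ} = {u : (‖∇u‖_p^γ + ‖u‖_p^γ)^{1/γ} = 1}`. -/
def MemSph (N : ℕ) (p γ : ℝ) (u : EucSp N → ℝ) (g : EucSp N → EucSp N) : Prop :=
  MemW1p N p u g ∧ (pNormV N p g ^ γ + pNorm N p u ^ γ) ^ (1/γ) = 1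

/-- The critical Sobolev exponent `p* = Np/(N-p)`. -/
def pstar (N : ℕ) (p : ℝ) : ℝ := N * p / (N - p)

/-- The sharp constant `S_{N,p}` in the Sobolev inequality `‖u‖_{p*} ≤ S_{N,p} ‖∇u‖_p`. -/
def sobolevConst (N : ℕ) (p : ℝ) : ℝ :=
  sSup {r : ℝ | ∃ u g, MemW1p N p u g ∧ ¬ (u =ᵐ[volume] fun _ => (0:ℝ)) ∧
    r = pNorm N (pstar N p) u / pNormV N p g}

/-- `D_{N,p,γ,α,q} = sup { ‖u‖_p^p + α ‖u‖_q^q : u ∈ S_{N,p,γ} }`. -/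
def Dval (N : ℕ) (p γ α q : ℝ) : ℝ :=
  sSup {J : ℝ | ∃ u g, MemSph N p γ u g ∧ J = pNorm N p u ^ p + α * pNorm N q u ^ q}

/-- `α_{N,p,q}(γ) = inf { (1 - ‖u‖_p^p)/‖u‖_q^q : u ∈ S_{N,p,γ} }`. -/
def alphaVal (N : ℕ) (p γ q : ℝ) : ℝ :=
  sInf {r : ℝ | ∃ u g, MemSph N p γ u g ∧ r = (1 - pNorm N p u ^ p) / pNorm N q u ^ q}

/-- The supremum `D_{N,p,γ,α,q}` is attained by some `u ∈ S_{N,p,γ}`. -/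
def DAttained (N : ℕ) (p γ α q : ℝ) : Prop :=
  ∃ u g, MemSph N p γ u g ∧
    pNorm N p u ^ p + α * pNorm N q u ^ q = Dval N p γ α q

/-- The infimum `α_{N,p,q}(γ)` is attained by some `u ∈ S_{N,p,γ}`. -/
def alphaAttained (N : ℕ) (p γ q : ℝ) : Prop :=
  ∃ u g, MemSph N p γ u g ∧
    (1 - pNorm N p u ^ p) / pNorm N q u ^ q = alphaVal N p γ q

/-- `γ_c = N(q-p)/p`. -/
def gammaC (N : ℕ) (p q : ℝ) : ℝ := N * (q - p) / p

/-- The sharp Gagliardo–Nirenberg–Sobolev constant `B_{N,p,q}`. -/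
def Bconst (N : ℕ) (p q : ℝ) : ℝ :=
  sSup {r : ℝ | ∃ u g, MemW1p N p u g ∧ ¬ (u =ᵐ[volume] fun _ => (0:ℝ)) ∧
    r = pNorm N q u ^ q /
      (pNormV N p g ^ gammaC N p q * pNorm N p u ^ (q - gammaC N p q))}

/-- The function `f_{N,p,γ,α}` from the critical case. -/
def fcrit (N : ℕ) (p γ α : ℝ) (t : ℝ) : ℝ :=
  ((1 + t) ^ ((pstar N p - p) / γ) + α * sobolevConst N p ^ pstar N p * t ^ (pstar N p / γ))
    / (1 + t) ^ (pstar N p / γ)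

/-- The function `f_{N,p,γ,α,q}` from the subcritical case. -/
def fsub (N : ℕ) (p γ α q : ℝ) (t : ℝ) : ℝ :=
  ((1 + t) ^ ((q - p) / γ) + α * Bconst N p q * t ^ (gammaC N p q / γ))
    / (1 + t) ^ (q / γ)

/-- The standard extremal function of the sharp Sobolev inequality. -/
def ustar (N : ℕ) (p : ℝ) (x : EucSp N) : ℝ :=
  (1 + ‖x‖ ^ (p / (p - 1))) ^ (-((N - p) / p))


/-! ### Auxiliary lemmas for `stmt8` -/

section AuxStmt8

variable {N : ℕ}

lemma aux_eLpNorm_comp_smul {F : Type*} [NormedAddCommGroup F] (f : EucSp N → F)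
    (hf : AEStronglyMeasurable f (volume : Measure (EucSp N))) {l : ℝ} (hl : 0 < l)
    {P : ENNReal} (hP : P ≠ ⊤) :
    eLpNorm (fun x => f (l • x)) P volume
      = ENNReal.ofReal ((l ^ N)⁻¹) ^ (1 / P).toReal * eLpNorm f P volume := by
  have hmap : Measure.map (l • ·) (volume : Measure (EucSp N))
      = ENNReal.ofReal ((l ^ N)⁻¹) • volume := by
    rw [Measure.map_addHaar_smul volume hl.ne']
    congr 2
    rw [finrank_euclideanSpace_fin, abs_of_nonneg (by positivity)]
  have hsm : AEStronglyMeasurable f (Measure.map (l • ·) (volume : Measure (EucSp N))) := by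
    rw [hmap]
    exact hf.mono_ac (Measure.smul_absolutelyContinuous)
  have h1 : eLpNorm (fun x => f (l • x)) P volume
      = eLpNorm f P (Measure.map (l • ·) (volume : Measure (EucSp N))) :=
    (eLpNorm_map_measure hsm (measurable_const_smul l).aemeasurable).symm
  rw [h1, hmap, eLpNorm_smul_measure_of_ne_top hP, smul_eq_mul]

lemma aux_pNorm_scale {F : Type*} [NormedAddCommGroup F] [NormedSpace ℝ F] (f : EucSp N → F)
    (hf : AEStronglyMeasurable f (volume : Measure (EucSp N))) {l : ℝ} (hl : 0 < l)
    {P : ℝ} (hP : 0 < P) (c : ℝ) :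
    (eLpNorm (fun x => c • f (l • x)) (ENNReal.ofReal P) volume).toReal
      = |c| * (((l ^ N : ℝ))⁻¹ ^ (1 / P) *
          (eLpNorm f (ENNReal.ofReal P) volume).toReal) := by
  have h1 : (fun x => c • f (l • x)) = c • (fun x => f (l • x)) := rfl
  rw [h1, eLpNorm_const_smul, aux_eLpNorm_comp_smul f hf hl (by simp)]
  have he : (1 / ENNReal.ofReal P).toReal = 1 / P := by
    rw [one_div, one_div, ENNReal.toReal_inv, ENNReal.toReal_ofReal hP.le]
  rw [he, ENNReal.toReal_mul, ENNReal.toReal_mul, ← ENNReal.toReal_rpow,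
    ENNReal.toReal_ofReal (by positivity)]
  simp [Real.norm_eq_abs, mul_assoc]

lemma aux_memLp_comp_smul {F : Type*} [NormedAddCommGroup F] {f : EucSp N → F} {P : ENNReal}
    (hf : MemLp f P (volume : Measure (EucSp N))) {l : ℝ} (hl : 0 < l) (hP : P ≠ ⊤) :
    MemLp (fun x => f (l • x)) P (volume : Measure (EucSp N)) := by
  refine ⟨hf.1.comp_quasiMeasurePreserving (Measure.quasiMeasurePreserving_smul volume hl.ne'), ?_⟩
  rw [aux_eLpNorm_comp_smul f hf.1 hl hP]
  exact ENNReal.mul_lt_top (ENNReal.rpow_lt_top_of_nonneg (by positivity) ENNReal.ofReal_ne_top)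
    hf.2

lemma aux_hasWeakGradient_scale {u : EucSp N → ℝ} {g : EucSp N → EucSp N}
    (h : HasWeakGradient N u g) {l : ℝ} (hl : 0 < l) (c : ℝ) :
    HasWeakGradient N (fun x => c * u (l • x)) (fun x => (c * l) • g (l • x)) := by
  intro φ hφ hφc v
  have hlne : l ≠ 0 := hl.ne'
  have hlinv : (l : ℝ)⁻¹ ≠ 0 := inv_ne_zero hlne
  set ψ : EucSp N → ℝ := fun y => φ (l⁻¹ • y) with hψdef
  have hψ : ContDiff ℝ (⊤ : ℕ∞) ψ := hφ.comp ((contDiff_const (c := l⁻¹)).smul contDiff_id)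
  have hψc : HasCompactSupport ψ := hφc.comp_smul hlinv
  have hG : ∀ x : EucSp N, ψ (l • x) = φ x := by
    intro x
    simp only [hψdef, inv_smul_smul₀ hlne]
  have hder : ∀ x : EucSp N, (fderiv ℝ φ x) v = l * (fderiv ℝ ψ (l • x)) v := by
    intro x
    have hs : HasFDerivAt (fun y : EucSp N => l⁻¹ • y)
        (l⁻¹ • ContinuousLinearMap.id ℝ (EucSp N)) (l • x) :=
      (hasFDerivAt_id _).const_smul l⁻¹
    have hφd : HasFDerivAt φ (fderiv ℝ φ x) (l⁻¹ • l • x) := by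
      rw [inv_smul_smul₀ hlne]
      exact ((hφ.differentiable (by simp)) x).hasFDerivAt
    have hcomp : HasFDerivAt ψ
        ((fderiv ℝ φ x).comp (l⁻¹ • ContinuousLinearMap.id ℝ (EucSp N))) (l • x) :=
      hφd.comp (l • x) hs
    rw [hcomp.fderiv, ContinuousLinearMap.comp_apply, ContinuousLinearMap.smul_apply,
      ContinuousLinearMap.id_apply]
    rw [(fderiv ℝ φ x).map_smul l⁻¹ v, smul_eq_mul, ← mul_assoc,
      mul_inv_cancel₀ hlne, one_mul]
  set d : ℝ := l ^ (Module.finrank ℝ (EucSp N)) with hd_def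
  have hd : 0 < d := by positivity
  have e1 : ∫ y, u y * (fderiv ℝ ψ y) v = - ∫ y, ⟪g y, v⟫ * ψ y := h ψ hψ hψc v
  have e2 : ∫ x, (fun y => u y * (fderiv ℝ ψ y) v) (l • x)
      = d⁻¹ • ∫ y, u y * (fderiv ℝ ψ y) v :=
    Measure.integral_comp_smul_of_nonneg volume (fun y => u y * (fderiv ℝ ψ y) v) l (hR := hl.le)
  have e3 : ∫ x, (fun y => ⟪g y, v⟫ * ψ y) (l • x) = d⁻¹ • ∫ y, ⟪g y, v⟫ * ψ y :=
    Measure.integral_comp_smul_of_nonneg volume (fun y => ⟪g y, v⟫ * ψ y) l (hR := hl.le)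
  have eG : ∫ y, ⟪g y, v⟫ * ψ y = d * ∫ x, ⟪g (l • x), v⟫ * φ x := by
    have h4 : ∫ x, (fun y => ⟪g y, v⟫ * ψ y) (l • x) = ∫ x, ⟪g (l • x), v⟫ * φ x := by
      congr 1
      funext x
      simp only [hG x]
    rw [h4] at e3
    rw [e3, smul_eq_mul, ← mul_assoc, mul_inv_cancel₀ hd.ne', one_mul]
  calc ∫ x, (c * u (l • x)) * (fderiv ℝ φ x) v
      = ∫ x, (c * l) * ((fun y => u y * (fderiv ℝ ψ y) v) (l • x)) := by
        congr 1
        funext x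
        rw [hder x]
        ring
    _ = (c * l) * ∫ x, (fun y => u y * (fderiv ℝ ψ y) v) (l • x) := integral_const_mul _ _
    _ = (c * l) * (d⁻¹ * (- ∫ y, ⟪g y, v⟫ * ψ y)) := by rw [e2, e1, smul_eq_mul]
    _ = (c * l) * (d⁻¹ * (- (d * ∫ x, ⟪g (l • x), v⟫ * φ x))) := by rw [eG]
    _ = - ((c * l) * ∫ x, ⟪g (l • x), v⟫ * φ x) := by
        field_simp
    _ = - ∫ x, (c * l) * (⟪g (l • x), v⟫ * φ x) := by rw [integral_const_mul]
    _ = - ∫ x, ⟪(c * l) • g (l • x), v⟫ * φ x := by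
        have hinner : ∀ x : EucSp N, ⟪(c * l) • g (l • x), v⟫ * φ x
            = (c * l) * (⟪g (l • x), v⟫ * φ x) := by
          intro x
          rw [real_inner_smul_left]
          ring
        simp_rw [hinner]

end AuxStmt8

lemma pNorm_nonneg' (N : ℕ) (p : ℝ) (u : EucSp N → ℝ) : 0 ≤ pNorm N p u :=
  ENNReal.toReal_nonneg

lemma pNormV_nonneg' (N : ℕ) (p : ℝ) (g : EucSp N → EucSp N) : 0 ≤ pNormV N p g :=
  ENNReal.toReal_nonneg

set_option maxHeartbeats 1000000 in
/-- If `0 < α < α_{N,p}(γ)` then `D_{N,p,γ,α}` is not attained and equals `1`. -/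
theorem stmt8 (N : ℕ) (hN : 2 ≤ N) (p γ α : ℝ) (hp1 : 1 < p) (hp : p < Real.sqrt N)
    (hγ : 0 < γ) (hα0 : 0 < α) (hα : α < alphaVal N p γ (pstar N p)) :
    ¬ DAttained N p γ α (pstar N p) ∧ Dval N p γ α (pstar N p) = 1 := by
  have hNR1 : (1:ℝ) ≤ (N:ℝ) := by exact_mod_cast Nat.one_le_of_lt hN
  have hsq : Real.sqrt N ≤ (N:ℝ) := by
    nth_rewrite 2 [← Real.sqrt_sq (by positivity : (0:ℝ) ≤ (N:ℝ))]
    exact Real.sqrt_le_sqrt (by nlinarith)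
  have hpN : p < (N:ℝ) := lt_of_lt_of_le hp hsq
  have hp0 : (0:ℝ) < p := lt_trans one_pos hp1
  have hq0 : 0 < pstar N p := by
    unfold pstar
    exact div_pos (mul_pos (lt_of_lt_of_le one_pos hNR1) hp0) (by linarith)
  set q := pstar N p with hqdef
  set A := {r : ℝ | ∃ u g, MemSph N p γ u g ∧
      r = (1 - pNorm N p u ^ p) / pNorm N q u ^ q} with hAdef
  have hαA : α < sInf A := hα
  have hA_ne : A.Nonempty := by
    by_contra h
    rw [Set.not_nonempty_iff_eq_empty] at h
    rw [h, Real.sInf_empty] at hαA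
    linarith
  have hA_bdd : BddBelow A := by
    by_contra h
    rw [Real.sInf_of_not_bddBelow h] at hαA
    linarith
  have key1 : ∀ u g, MemSph N p γ u g → 0 < pNorm N q u ^ q := by
    intro u g hug
    rcases (Real.rpow_nonneg (pNorm_nonneg' N q u) q).eq_or_lt with he | h
    · exfalso
      have hmem : (0:ℝ) ∈ A := by
        refine ⟨u, g, hug, ?_⟩
        rw [← he, div_zero]
      have := csInf_le hA_bdd hmem
      linarith
    · exact h
  have key2 : ∀ u g, MemSph N p γ u g →
      pNorm N p u ^ p + α * pNorm N q u ^ q < 1 := by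
    intro u g hug
    have hd := key1 u g hug
    have hmem : (1 - pNorm N p u ^ p) / pNorm N q u ^ q ∈ A := ⟨u, g, hug, rfl⟩
    have h2 : α < (1 - pNorm N p u ^ p) / pNorm N q u ^ q :=
      lt_of_lt_of_le hαA (csInf_le hA_bdd hmem)
    rw [lt_div_iff₀ hd] at h2
    linarith
  -- seed element of the sphere
  obtain ⟨r0, u₀, g₀, h₀, -⟩ := hA_ne
  set a₀ := pNormV N p g₀ with ha₀def
  set b₀ := pNorm N p u₀ with hb₀def
  have ha₀0 : 0 ≤ a₀ := pNormV_nonneg' N p g₀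
  have hb₀pos : 0 < b₀ := by
    rcases (pNorm_nonneg' N p u₀).eq_or_lt with he | h
    · exfalso
      have hsm := h₀.1.1.1
      have hne : eLpNorm u₀ (ENNReal.ofReal p) volume ≠ ⊤ := h₀.1.1.2.ne
      have h0 : eLpNorm u₀ (ENNReal.ofReal p) volume = 0 := by
        have h00 : (eLpNorm u₀ (ENNReal.ofReal p) volume).toReal = 0 := he.symm
        rcases (ENNReal.toReal_eq_zero_iff _).1 h00 with h | h
        · exact h
        · exact absurd h hne
      have hzero : u₀ =ᵐ[volume] (fun _ => (0:ℝ)) := by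
        rw [eLpNorm_eq_zero_iff hsm (by
          simp only [ne_eq, ENNReal.ofReal_eq_zero, not_le]
          linarith)] at h0
        exact h0
      have hq_norm : pNorm N q u₀ = 0 := by
        unfold pNorm
        rw [eLpNorm_congr_ae hzero]
        simp
      have hk := key1 u₀ g₀ h₀
      rw [hq_norm, Real.zero_rpow hq0.ne'] at hk
      exact lt_irrefl 0 hk
    · exact h
  have hb₀γ : 0 < b₀ ^ γ := Real.rpow_pos_of_pos hb₀pos γ
  -- the rescaled family
  have family : ∀ t : ℝ, 0 < t →
      ∃ u g, MemSph N p γ u g ∧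
        pNorm N p u = b₀ / ((t * a₀) ^ γ + b₀ ^ γ) ^ (1/γ) := by
    intro t ht
    set S : ℝ := (t * a₀) ^ γ + b₀ ^ γ with hS
    have hS0 : 0 < S := by
      have := Real.rpow_nonneg (by positivity : (0:ℝ) ≤ t * a₀) γ
      rw [hS]; linarith
    set m : ℝ := S ^ (1/γ) with hm
    have hm0 : 0 < m := Real.rpow_pos_of_pos hS0 _
    set K : ℝ := ((t ^ N : ℝ))⁻¹ ^ (1/p) with hK
    have hK0 : 0 < K := Real.rpow_pos_of_pos (by positivity) _
    set c : ℝ := (m * K)⁻¹ with hc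
    have hc0 : 0 < c := by rw [hc]; positivity
    have hnu : pNorm N p (fun x => c * u₀ (t • x)) = b₀ / m := by
      have haux := aux_pNorm_scale u₀ h₀.1.1.1 ht hp0 c
      have hpn : (eLpNorm u₀ (ENNReal.ofReal p) volume).toReal = b₀ := rfl
      rw [hpn, ← hK] at haux
      show (eLpNorm (fun x => c • u₀ (t • x)) (ENNReal.ofReal p) volume).toReal = b₀ / m
      rw [haux, abs_of_pos hc0, hc]
      field_simp
    have hng : pNormV N p (fun x => (c * t) • g₀ (t • x)) = t * a₀ / m := by
      have haux := aux_pNorm_scale g₀ h₀.1.2.1.1 ht hp0 (c * t)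
      have hpn : (eLpNorm g₀ (ENNReal.ofReal p) volume).toReal = a₀ := rfl
      rw [hpn, ← hK] at haux
      show (eLpNorm (fun x => (c * t) • g₀ (t • x)) (ENNReal.ofReal p) volume).toReal
        = t * a₀ / m
      rw [haux, abs_of_pos (by positivity), hc]
      field_simp
    refine ⟨fun x => c * u₀ (t • x), fun x => (c * t) • g₀ (t • x),
      ⟨⟨?_, ?_, ?_⟩, ?_⟩, ?_⟩
    · exact (aux_memLp_comp_smul h₀.1.1 ht (by simp)).const_mul c
    · exact (aux_memLp_comp_smul h₀.1.2.1 ht (by simp)).const_smul (c * t)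
    · exact aux_hasWeakGradient_scale h₀.1.2.2 ht c
    · -- the sphere normalization
      rw [hnu, hng]
      have hmγ : m ^ γ = S := by
        rw [hm, ← Real.rpow_mul hS0.le, one_div_mul_cancel hγ.ne', Real.rpow_one]
      rw [Real.div_rpow (by positivity) hm0.le, Real.div_rpow hb₀pos.le hm0.le,
        ← add_div, hmγ, ← hS, div_self hS0.ne', Real.one_rpow]
    · exact hnu
  -- the supremum set
  set B := {J : ℝ | ∃ u g, MemSph N p γ u g ∧
      J = pNorm N p u ^ p + α * pNorm N q u ^ q} with hBdef
  have hDval : Dval N p γ α q = sSup B := rfl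
  have hB_bdd : BddAbove B := by
    refine ⟨1, ?_⟩
    rintro J ⟨u, g, hug, rfl⟩
    exact (key2 u g hug).le
  have hsup_le : sSup B ≤ 1 := by
    apply Real.sSup_le _ zero_le_one
    rintro J ⟨u, g, hug, rfl⟩
    exact (key2 u g hug).le
  have hle_sup : (1:ℝ) ≤ sSup B := by
    by_contra hlt'
    push_neg at hlt'
    have hval : (0 * a₀) ^ γ + b₀ ^ γ = b₀ ^ γ := by
      rw [zero_mul, Real.zero_rpow hγ.ne', zero_add]
    have c1 : ContinuousAt (fun t : ℝ => (t * a₀) ^ γ + b₀ ^ γ) 0 := by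
      refine ContinuousAt.add ?_ continuousAt_const
      exact ContinuousAt.rpow_const ((continuous_id.mul continuous_const).continuousAt)
        (Or.inr hγ.le)
    have c4 : ContinuousAt (fun t : ℝ => ((t * a₀) ^ γ + b₀ ^ γ) ^ (1/γ)) 0 := by
      refine c1.rpow_const (Or.inl ?_)
      show (0 * a₀) ^ γ + b₀ ^ γ ≠ 0
      rw [hval]
      exact hb₀γ.ne'
    have c5 : ContinuousAt (fun t : ℝ => b₀ / ((t * a₀) ^ γ + b₀ ^ γ) ^ (1/γ)) 0 := by
      refine ContinuousAt.div continuousAt_const c4 ?_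
      show ((0 * a₀) ^ γ + b₀ ^ γ) ^ (1/γ) ≠ 0
      rw [hval]
      exact (Real.rpow_pos_of_pos hb₀γ (1/γ)).ne'
    have hF : ContinuousAt (fun t : ℝ => (b₀ / ((t * a₀) ^ γ + b₀ ^ γ) ^ (1/γ)) ^ p) 0 := by
      refine c5.rpow_const (Or.inl ?_)
      show b₀ / ((0 * a₀) ^ γ + b₀ ^ γ) ^ (1/γ) ≠ 0
      rw [hval]
      positivity
    have hF0 : (b₀ / ((0 * a₀) ^ γ + b₀ ^ γ) ^ (1/γ)) ^ p = 1 := by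
      rw [hval, ← Real.rpow_mul hb₀pos.le, mul_one_div, div_self hγ.ne', Real.rpow_one,
        div_self hb₀pos.ne', Real.one_rpow]
    have htend : Filter.Tendsto (fun t : ℝ => (b₀ / ((t * a₀) ^ γ + b₀ ^ γ) ^ (1/γ)) ^ p)
        (nhdsWithin 0 (Set.Ioi 0)) (nhds 1) := by
      have h := hF.tendsto.mono_left (nhdsWithin_le_nhds (s := Set.Ioi 0))
      rw [hF0] at h
      exact h
    have hev : ∀ᶠ t in nhdsWithin 0 (Set.Ioi 0),
        sSup B < (b₀ / ((t * a₀) ^ γ + b₀ ^ γ) ^ (1/γ)) ^ p :=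
      htend.eventually (eventually_gt_nhds hlt')
    obtain ⟨t, hts, htmem⟩ := (hev.and self_mem_nhdsWithin).exists
    have ht0 : 0 < t := htmem
    obtain ⟨u, g, hug, hnorm⟩ := family t ht0
    have hJB : pNorm N p u ^ p + α * pNorm N q u ^ q ∈ B := ⟨u, g, hug, rfl⟩
    have hle := le_csSup hB_bdd hJB
    have h2 : 0 ≤ α * pNorm N q u ^ q :=
      mul_nonneg hα0.le (Real.rpow_nonneg (pNorm_nonneg' N q u) q)
    rw [← hnorm] at hts
    linarith
  have hD1 : Dval N p γ α q = 1 := by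
    rw [hDval]
    exact le_antisymm hsup_le hle_sup
  refine ⟨?_, hD1⟩
  rintro ⟨u, g, hug, heq⟩
  rw [hD1] at heq
  exact absurd heq (ne_of_lt (key2 u g hug))


end
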